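/- arXiv:2005.02740 — 10 statements merged into one kernel-verified Lean document; each statement's English description precedes it below -/
import Mathlib

section
/- Let A be an n×n lower triangular integer matrix with all diagonal entries equal to -1. For a subset I of {1,...,n}, define L_I to be the n×n matrix whose j-th column is the standard basis vector e_j if j ∈ I, and the j-th column of A if j ∉ I. Then the matrix A_I := L_I^{-1} · L_{I^c} is again a lower triangular integer matrix with all diagonal entries equal to -1. -/
/-! `L_I` is lower triangular with diagonal entries `L_I i i ∈ {1, A i i}` and
`L_I i i * L_{Iᶜ} i i = A i i`. Hence `L_I` is invertible with `L_I⁻¹` lower triangular,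
`A_I = L_I⁻¹ L_{Iᶜ}` is lower triangular, and reading the diagonal of `L_I A_I = L_{Iᶜ}`
gives `A_I i i = L_I i i * L_{Iᶜ} i i = A i i = -1`, since `L_I i i = ±1` is its own inverse. -/

/-- The matrix `L_I` associated to an `n × n` integer matrix `A` and a subset
`I ⊆ {1,…,n}`: its `j`-th column is the standard basis vector `e_j` if `j ∈ I`,
and the `j`-th column of `A` otherwise. -/
def Lmat {n : ℕ} (A : Matrix (Fin n) (Fin n) ℤ) (I : Finset (Fin n)) :
    Matrix (Fin n) (Fin n) ℤ :=
  Matrix.of fun i j => if j ∈ I then (if i = j then 1 else 0) else A i j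

namespace Matrix

variable {m R : Type*} [Fintype m] [LinearOrder m]

theorem IsLowerTriangular.mul_apply_self [NonUnitalNonAssocSemiring R] {M N : Matrix m m R}
    (hM : M.IsLowerTriangular) (hN : N.IsLowerTriangular) (i : m) :
    (M * N) i i = M i i * N i i := by
  rw [mul_apply]
  refine Finset.sum_eq_single i (fun k _ hki => ?_) (fun h => absurd (Finset.mem_univ i) h)
  rcases hki.lt_or_gt with hlt | hgt
  · rw [hN (show OrderDual.toDual i < OrderDual.toDual k from hlt), mul_zero]
  · rw [hM (show OrderDual.toDual k < OrderDual.toDual i from hgt), zero_mul]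

theorem IsLowerTriangular.isUnit_det [CommRing R] {M : Matrix m m R}
    (hM : M.IsLowerTriangular) (h : ∀ i, IsUnit (M i i)) : IsUnit M.det := by
  rw [det_of_isLowerTriangular M hM]
  exact IsUnit.prod_univ_iff.mpr h

end Matrix

section Lmat

variable {n : ℕ} (A : Matrix (Fin n) (Fin n) ℤ) (I : Finset (Fin n))

theorem Lmat_isLowerTriangular (hA : A.IsLowerTriangular) : (Lmat A I).IsLowerTriangular := by
  intro i j hij
  have hne : i ≠ j := (OrderDual.toDual_lt_toDual.mp hij).ne
  simp only [Lmat, Matrix.of_apply, if_neg hne]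
  split_ifs
  · rfl
  · exact hA hij

theorem Lmat_apply_self (i : Fin n) : Lmat A I i i = if i ∈ I then 1 else A i i := by
  simp only [Lmat, Matrix.of_apply, if_true]

theorem Lmat_apply_self_mul_compl (i : Fin n) : Lmat A I i i * Lmat A Iᶜ i i = A i i := by
  simp only [Lmat_apply_self, Finset.mem_compl]
  split_ifs <;> simp

theorem Lmat_apply_self_mul_self {i : Fin n} (hi : A i i = -1) :
    Lmat A I i i * Lmat A I i i = 1 := by
  rw [Lmat_apply_self]
  split_ifs <;> simp [hi]

end Lmat

/-- If `A` is lower triangular with `-1`'s on the diagonal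
(a Bott matrix), then for any subset `I` the matrix `A_I := L_I⁻¹ * L_{Iᶜ}`
is again lower triangular with `-1`'s on the diagonal. -/
theorem stmt0 {n : ℕ} (A : Matrix (Fin n) (Fin n) ℤ)
    (hlt : ∀ i j : Fin n, i < j → A i j = 0)
    (hdiag : ∀ i : Fin n, A i i = -1)
    (I : Finset (Fin n)) :
    (∀ i j : Fin n, i < j → ((Lmat A I)⁻¹ * Lmat A Iᶜ) i j = 0) ∧
    (∀ i : Fin n, ((Lmat A I)⁻¹ * Lmat A Iᶜ) i i = -1) := by
  have hA : A.IsLowerTriangular := fun i j hij => hlt i j hij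
  set L := Lmat A I
  set M := Lmat A Iᶜ
  have hL : L.IsLowerTriangular := Lmat_isLowerTriangular A I hA
  have hL_sq (i : Fin n) : L i i * L i i = 1 := Lmat_apply_self_mul_self A I (hdiag i)
  have hdet : IsUnit L.det := hL.isUnit_det fun i => IsUnit.of_mul_eq_one _ (hL_sq i)
  have hLinv : L⁻¹.IsLowerTriangular :=
    have := L.invertibleOfIsUnitDet hdet
    Matrix.blockTriangular_inv_of_blockTriangular hL
  have hAI : (L⁻¹ * M).IsLowerTriangular := hLinv.mul (Lmat_isLowerTriangular A Iᶜ hA)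
  refine ⟨fun i j hij => hAI hij, fun i => ?_⟩
  have hdiag_eq : L i i * (L⁻¹ * M) i i = M i i := by
    rw [← hL.mul_apply_self hAI, ← Matrix.mul_assoc, Matrix.mul_nonsing_inv L hdet,
      Matrix.one_mul]
  calc (L⁻¹ * M) i i = L i i * (L i i * (L⁻¹ * M) i i) := by rw [← mul_assoc, hL_sq, one_mul]
    _ = L i i * M i i := by rw [hdiag_eq]
    _ = -1 := by rw [Lmat_apply_self_mul_compl, hdiag]
end

section
/- Let A be an n×n lower triangular integer matrix with -1's on the diagonal, and let I = {1,...,n} \ {k} for some k. Write a_{i,j} for the entries of A. Then the matrix A_I = L_I^{-1} L_{{k}} (with L as in the Bott matrix operation) has rows related to those of A+E (E the identity) as follows: the i-th row of A_I + E equals the i-th row of A+E for i < k; equals the negative of the k-th row of A+E for i = k; and equals (i-th row of A+E) + a_{i,k}·(k-th row of A+E) for i > k. -/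
open Matrix

section RankOne

variable {m R : Type*} [Fintype m] [DecidableEq m] [CommRing R] {u v : m → R}

theorem one_add_vecMulVec_mul_self (huv : v ⬝ᵥ u = -2) :
    (1 + vecMulVec u v) * (1 + vecMulVec u v) = 1 := by
  rw [add_mul, mul_add, mul_add, vecMulVec_mul_vecMulVec, huv, vecMulVec_smul]
  simp only [mul_one, one_mul]
  module

theorem one_add_vecMulVec_mul_sub_vecMulVec_add_one (huv : v ⬝ᵥ u = -2) (A : Matrix m m R) :
    (1 + vecMulVec u v) * (A - vecMulVec u v) + 1 = A + 1 + vecMulVec u (v ᵥ* (A + 1)) := by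
  rw [add_mul, mul_sub, mul_sub, vecMulVec_mul_vecMulVec, huv, vecMulVec_smul, vecMulVec_mul,
    vecMul_add, vecMul_one, vecMulVec_add]
  simp only [one_mul]
  module

end RankOne

section Lmat

variable {n : ℕ} (A : Matrix (Fin n) (Fin n) ℤ) (k : Fin n)

theorem Lmat_compl_singleton :
    Lmat A {k}ᶜ = 1 + vecMulVec (fun i => (A - 1) i k) (Pi.single k 1) := by
  ext i j
  rcases eq_or_ne j k with rfl | hj
  · simp [Lmat, vecMulVec_apply, one_apply]
  · simp [Lmat, vecMulVec_apply, hj, one_apply]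

theorem Lmat_singleton :
    Lmat A {k} = A - vecMulVec (fun i => (A - 1) i k) (Pi.single k 1) := by
  ext i j
  rcases eq_or_ne j k with rfl | hj
  · simp [Lmat, vecMulVec_apply, one_apply]
  · simp [Lmat, vecMulVec_apply, hj]

theorem Lmat_inv_mul_Lmat_add_one (hk : A k k = -1) :
    (Lmat A {k}ᶜ)⁻¹ * Lmat A {k} + 1 = A + 1 + vecMulVec (fun i => (A - 1) i k) ((A + 1) k) := by
  have huv : Pi.single k 1 ⬝ᵥ (fun i => (A - 1) i k) = -2 := by
    rw [single_one_dotProduct, Matrix.sub_apply, hk, one_apply_eq]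
    norm_num
  rw [Lmat_compl_singleton, inv_eq_left_inv (one_add_vecMulVec_mul_self huv), Lmat_singleton,
    one_add_vecMulVec_mul_sub_vecMulVec_add_one huv, single_one_vecMul]
  rfl

end Lmat

/-- For a Bott matrix `A` (lower triangular, `-1` diagonal) and
`I = {1,…,n} \ {k}`, the rows of `A_I + E` (where `A_I = L_I⁻¹ · L_{{k}}` and `E`
is the identity) are: the rows of `A + E` for `i < k`; the negative of the `k`-th
row of `A + E` for `i = k`; and row `i` of `A+E` plus `a_{i,k}` times row `k` of
`A+E` for `i > k`. -/
theorem stmt1 {n : ℕ} (A : Matrix (Fin n) (Fin n) ℤ)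
    (hlt : ∀ i j : Fin n, i < j → A i j = 0)
    (hdiag : ∀ i : Fin n, A i i = -1)
    (k : Fin n) :
    (∀ i j : Fin n, i < k →
      ((Lmat A ({k}ᶜ))⁻¹ * Lmat A {k} + 1) i j = (A + 1) i j) ∧
    (∀ j : Fin n,
      ((Lmat A ({k}ᶜ))⁻¹ * Lmat A {k} + 1) k j = -((A + 1) k j)) ∧
    (∀ i j : Fin n, k < i →
      ((Lmat A ({k}ᶜ))⁻¹ * Lmat A {k} + 1) i j
        = (A + 1) i j + A i k * ((A + 1) k j)) := by
  rw [Lmat_inv_mul_Lmat_add_one A k (hdiag k)]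
  simp only [Matrix.add_apply, vecMulVec_apply, Matrix.sub_apply]
  refine ⟨fun i j hik => ?_, fun j => ?_, fun i j hki => ?_⟩
  · rw [hlt i k hik, one_apply_ne hik.ne]
    ring
  · rw [hdiag k, one_apply_eq]
    ring
  · rw [one_apply_ne hki.ne']
    ring
end

section
/- Let R = ℚ[x_1,...,x_n]/⟨x_i² − α_i x_i : i = 1,...,n⟩ where α_i = a_{i,1}x_1 + ... + a_{i,i-1}x_{i-1} for a lower triangular rational matrix (a_{i,j}). Set y_i := x_i − α_i/2 in R. Then the product y_1 · y_2 · ... · y_n is nonzero in R; in fact, y_1···y_n = x_1···x_n plus a linear combination of other degree-n square-free monomials in the x_i. -/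
/-!
Since `x_j² = α_j x_j` and `α_j` only involves the `x_m` with `m < j`, induction on `j` shows that
`x_j` kills every square-free monomial containing `x_1, …, x_j`. Hence `α_i x_1 ⋯ x_{i-1} = 0`, so
`y_1 ⋯ y_i = y_i x_1 ⋯ x_{i-1} = x_1 ⋯ x_i`.

For `x_1 ⋯ x_n ≠ 0`, let `R'` be the ring of the upper left `(n-1) × (n-1)` block of `A`. Sending
`x_n ↦ t` and `x_i ↦ x_i` gives a map `R → R'[t]/(t² − α_n t)` taking `x_1 ⋯ x_n` to
`(x_1 ⋯ x_{n-1}) t`, which is nonzero because its degree is `1 < 2` and `x_1 ⋯ x_{n-1} ≠ 0` by induction.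
-/

open MvPolynomial

/-- `α_i = Σ_{j<i} a_{i,j} x_j` as a polynomial. -/
noncomputable def bottAlphaQ {n : ℕ} (A : Matrix (Fin n) (Fin n) ℚ) (i : Fin n) :
    MvPolynomial (Fin n) ℚ :=
  ∑ j ∈ Finset.univ.filter (fun j => j < i), C (A i j) * X j

/-- The defining ideal `⟨x_i² − α_i x_i : i = 1,…,n⟩` of the rational cohomology
ring of the Bott manifold determined by the lower triangular matrix `A`. -/
noncomputable def bottIdealQ {n : ℕ} (A : Matrix (Fin n) (Fin n) ℚ) :
    Ideal (MvPolynomial (Fin n) ℚ) :=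
  Ideal.span (Set.range fun i : Fin n => X i ^ 2 - bottAlphaQ A i * X i)

/-- The class `x_i` in `R = ℚ[x_1,…,x_n]/⟨x_i² − α_i x_i⟩`. -/
noncomputable def bxQ {n : ℕ} (A : Matrix (Fin n) (Fin n) ℚ) (i : Fin n) :
    MvPolynomial (Fin n) ℚ ⧸ bottIdealQ A :=
  Ideal.Quotient.mk _ (X i)

/-- The class `α_i` in `R`. -/
noncomputable def baQ {n : ℕ} (A : Matrix (Fin n) (Fin n) ℚ) (i : Fin n) :
    MvPolynomial (Fin n) ℚ ⧸ bottIdealQ A :=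
  Ideal.Quotient.mk _ (bottAlphaQ A i)

/-- The class `y_i := x_i − α_i/2` in `R`. -/
noncomputable def byQ {n : ℕ} (A : Matrix (Fin n) (Fin n) ℚ) (i : Fin n) :
    MvPolynomial (Fin n) ℚ ⧸ bottIdealQ A :=
  bxQ A i - (1 / 2 : ℚ) • baQ A i

section

variable {n : ℕ} (A : Matrix (Fin n) (Fin n) ℚ)

lemma baQ_eq_sum (i : Fin n) :
    baQ A i = ∑ j ∈ Finset.univ.filter (fun j => j < i), A i j • bxQ A j := by
  simp only [baQ, bottAlphaQ, ← smul_eq_C_mul, map_sum, map_rat_smul]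
  rfl

lemma bxQ_sq (i : Fin n) : bxQ A i ^ 2 = baQ A i * bxQ A i := by
  have h : X i ^ 2 - bottAlphaQ A i * X i ∈ bottIdealQ A := Ideal.subset_span ⟨i, rfl⟩
  rw [← Ideal.Quotient.eq_zero_iff_mem, map_sub, map_pow, map_mul, sub_eq_zero] at h
  exact h

lemma prod_mul_bxQ_eq_zero {s : Finset (Fin n)} {j : Fin n} (hs : Finset.Iic j ⊆ s) :
    (∏ i ∈ s, bxQ A i) * bxQ A j = 0 := by
  induction j using WellFoundedLT.induction with
  | ind j ih =>
    have hj : j ∈ s := hs (Finset.mem_Iic.2 le_rfl)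
    calc (∏ i ∈ s, bxQ A i) * bxQ A j
        = (∏ i ∈ s, bxQ A i) * baQ A j := by
          rw [← Finset.prod_erase_mul s _ hj, mul_assoc, ← sq, bxQ_sq]; ring
      _ = ∑ m ∈ Finset.univ.filter (fun m => m < j), A j m • ((∏ i ∈ s, bxQ A i) * bxQ A m) := by
          simp only [baQ_eq_sum, Finset.mul_sum, mul_smul_comm]
      _ = 0 := Finset.sum_eq_zero fun m hm => by
          have hmj : m < j := (Finset.mem_filter.1 hm).2
          rw [ih m hmj ((Finset.Iic_subset_Iic.2 hmj.le).trans hs), smul_zero]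

lemma baQ_mul_prod_bxQ_eq_zero {s : Finset (Fin n)} {i : Fin n} (hs : Finset.Iio i ⊆ s) :
    baQ A i * ∏ j ∈ s, bxQ A j = 0 := by
  rw [baQ_eq_sum, Finset.sum_mul]
  refine Finset.sum_eq_zero fun m hm => ?_
  have hmi : m < i := (Finset.mem_filter.1 hm).2
  rw [smul_mul_assoc, mul_comm, prod_mul_bxQ_eq_zero A
    fun x hx => hs (Finset.mem_Iio.2 ((Finset.mem_Iic.1 hx).trans_lt hmi)), smul_zero]

lemma prod_byQ_eq_prod_bxQ_of_isLowerSet {s : Finset (Fin n)}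
    (hs : IsLowerSet (s : Set (Fin n))) : ∏ i ∈ s, byQ A i = ∏ i ∈ s, bxQ A i := by
  induction s using Finset.induction_on_max with
  | empty => simp
  | insert a s has ih =>
    have hnot : a ∉ s := fun h => lt_irrefl a (has a h)
    have hIio : Finset.Iio a ⊆ s := fun m hm => by
      have hm := Finset.mem_Iio.1 hm
      exact (Finset.mem_insert.1 (hs hm.le (by simp))).resolve_left hm.ne
    have hs' : IsLowerSet (s : Set (Fin n)) := fun x y hyx hx =>
      (Finset.mem_insert.1 (hs hyx (by simp [Finset.mem_coe.1 hx]))).resolve_left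
        ((hyx.trans_lt (has x hx)).ne)
    rw [Finset.prod_insert hnot, Finset.prod_insert hnot, ih hs', byQ, sub_mul,
      smul_mul_assoc, baQ_mul_prod_bxQ_eq_zero A hIio, smul_zero, sub_zero]

lemma prod_byQ_eq_prod_bxQ : ∏ i, byQ A i = ∏ i, bxQ A i :=
  prod_byQ_eq_prod_bxQ_of_isLowerSet A (by simpa using isLowerSet_univ)

end

lemma AdjoinRoot.of_mul_root_ne_zero {R : Type*} [CommRing R] {a r : R} (hr : r ≠ 0) :
    of (Polynomial.X ^ 2 - Polynomial.C a * Polynomial.X) r *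
      root (Polynomial.X ^ 2 - Polynomial.C a * Polynomial.X) ≠ 0 := by
  have : Nontrivial R := nontrivial_of_ne r 0 hr
  have hlt : (Polynomial.C a * Polynomial.X).degree < (Polynomial.X ^ 2 : Polynomial R).degree := by
    rw [Polynomial.degree_X_pow]
    exact (Polynomial.degree_C_mul_X_le a).trans_lt (by norm_num)
  have hmonic : (Polynomial.X ^ 2 - Polynomial.C a * Polynomial.X).Monic :=
    Polynomial.monic_X_pow_sub (by rwa [Polynomial.degree_X_pow] at hlt)
  rw [← mk_C, ← mk_X, ← map_mul]
  refine mk_ne_zero_of_degree_lt hmonic (by simpa using hr) ?_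
  rw [Polynomial.degree_C_mul_X hr, Polynomial.degree_sub_eq_left_of_degree_lt hlt,
    Polynomial.degree_X_pow]
  norm_num

section

variable {n : ℕ} (A : Matrix (Fin n) (Fin n) ℚ)

noncomputable def lastVarPolyQ :
    MvPolynomial (Fin (n + 1)) ℚ →ₐ[ℚ] Polynomial (MvPolynomial (Fin n) ℚ ⧸ bottIdealQ A) :=
  aeval (Fin.lastCases Polynomial.X fun k => Polynomial.C (bxQ A k))

lemma lastVarPolyQ_X_last : lastVarPolyQ A (X (Fin.last n)) = Polynomial.X := by
  simp [lastVarPolyQ]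

lemma lastVarPolyQ_X_castSucc (k : Fin n) :
    lastVarPolyQ A (X k.castSucc) = Polynomial.C (bxQ A k) := by
  simp [lastVarPolyQ]

lemma lastVarPolyQ_rename (p : MvPolynomial (Fin n) ℚ) :
    lastVarPolyQ A (rename Fin.castSucc p) = Polynomial.C (Ideal.Quotient.mk _ p) := by
  induction p using MvPolynomial.induction_on with
  | C c =>
    simp only [lastVarPolyQ, rename_C, aeval_C]
    rfl
  | add p q hp hq => simp_all
  | mul_X p k hp => simp_all [lastVarPolyQ_X_castSucc, bxQ]

end

section

variable {n : ℕ} (A : Matrix (Fin (n + 1)) (Fin (n + 1)) ℚ)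

lemma bottAlphaQ_eq_rename_castSucc (i : Fin (n + 1)) :
    bottAlphaQ A i = rename Fin.castSucc
      (∑ m ∈ Finset.univ.filter (fun m : Fin n => m.castSucc < i), C (A i m.castSucc) * X m) := by
  simp [bottAlphaQ, Finset.sum_filter, Fin.sum_univ_castSucc, apply_ite,
    not_lt_of_ge (Fin.le_last i)]

lemma bottAlphaQ_castSucc (k : Fin n) :
    bottAlphaQ A k.castSucc =
      rename Fin.castSucc (bottAlphaQ (A.submatrix Fin.castSucc Fin.castSucc) k) := by
  simp only [bottAlphaQ_eq_rename_castSucc, Fin.castSucc_lt_castSucc_iff]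
  rfl

lemma exists_bottIdealQ_le_ker_lastVarPolyQ : ∃ a, bottIdealQ A ≤ RingHom.ker
    ((AdjoinRoot.mk (Polynomial.X ^ 2 - Polynomial.C a * Polynomial.X)).comp
      (lastVarPolyQ (A.submatrix Fin.castSucc Fin.castSucc)).toRingHom) := by
  set A' := A.submatrix Fin.castSucc Fin.castSucc
  obtain ⟨a, ha⟩ : ∃ a, lastVarPolyQ A' (bottAlphaQ A (Fin.last n)) = Polynomial.C a :=
    ⟨_, by rw [bottAlphaQ_eq_rename_castSucc, lastVarPolyQ_rename]⟩
  refine ⟨a, Ideal.span_le.2 ?_⟩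
  rintro _ ⟨i, rfl⟩
  induction i using Fin.lastCases with
  | last =>
    simp only [SetLike.mem_coe, RingHom.mem_ker, RingHom.comp_apply, AlgHom.toRingHom_eq_coe,
      RingHom.coe_coe, map_sub, map_mul, map_pow, ha, lastVarPolyQ_X_last]
    exact AdjoinRoot.mk_self
  | cast k =>
    have hgen : X k ^ 2 - bottAlphaQ A' k * X k ∈ bottIdealQ A' := Ideal.subset_span ⟨k, rfl⟩
    have hrename : X k.castSucc ^ 2 - bottAlphaQ A k.castSucc * X k.castSucc =
        rename Fin.castSucc (X k ^ 2 - bottAlphaQ A' k * X k) := by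
      simp [bottAlphaQ_castSucc, A']
    simp only [SetLike.mem_coe, RingHom.mem_ker, hrename, RingHom.comp_apply,
      AlgHom.toRingHom_eq_coe, RingHom.coe_coe, lastVarPolyQ_rename,
      Ideal.Quotient.eq_zero_iff_mem.2 hgen, map_zero]

lemma prod_bxQ_ne_zero_of_submatrix
    (h : ∏ k, bxQ (A.submatrix Fin.castSucc Fin.castSucc) k ≠ 0) : ∏ i, bxQ A i ≠ 0 := by
  obtain ⟨a, hker⟩ := exists_bottIdealQ_le_ker_lastVarPolyQ A
  set φ := Ideal.Quotient.lift _ _ hker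
  have hcast : ∀ k, φ (bxQ A k.castSucc) = AdjoinRoot.of _ (bxQ _ k) := fun k =>
    (Ideal.Quotient.lift_mk _ _ _).trans (by simp [lastVarPolyQ_X_castSucc])
  have hlast : φ (bxQ A (Fin.last n)) = AdjoinRoot.root _ :=
    (Ideal.Quotient.lift_mk _ _ _).trans (by simp [lastVarPolyQ_X_last])
  intro h0
  have hφ := congrArg φ h0
  rw [Fin.prod_univ_castSucc, map_mul, map_prod, map_zero] at hφ
  simp only [hcast, hlast, ← map_prod] at hφ
  exact AdjoinRoot.of_mul_root_ne_zero h hφ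

end

lemma prod_bxQ_ne_zero : ∀ {n : ℕ} (A : Matrix (Fin n) (Fin n) ℚ), ∏ i, bxQ A i ≠ 0
  | 0, A => by
    have hbot : bottIdealQ A = ⊥ := by simp [bottIdealQ]
    have : Nontrivial (MvPolynomial (Fin 0) ℚ ⧸ bottIdealQ A) :=
      Ideal.Quotient.nontrivial_iff.2 (hbot ▸ bot_ne_top)
    simp
  | _ + 1, A => prod_bxQ_ne_zero_of_submatrix A (prod_bxQ_ne_zero _)

theorem stmt3_general {n : ℕ} (A : Matrix (Fin n) (Fin n) ℚ) :
    (∏ i : Fin n, byQ A i) ≠ 0 ∧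
    (∏ i : Fin n, byQ A i) = ∏ i : Fin n, bxQ A i := by
  rw [prod_byQ_eq_prod_bxQ]
  exact ⟨prod_bxQ_ne_zero A, rfl⟩

/-- In `R = ℚ[x_1,…,x_n]/⟨x_i² − α_i x_i⟩` with
`y_i = x_i − α_i/2`, the product `y_1 ⋯ y_n` is nonzero; in fact it equals
`x_1 ⋯ x_n` (the unique square-free monomial with `n` factors). -/
theorem stmt3 {n : ℕ} (A : Matrix (Fin n) (Fin n) ℚ)
    (hlt : ∀ i j : Fin n, i < j → A i j = 0) :
    (∏ i : Fin n, byQ A i) ≠ 0 ∧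
    (∏ i : Fin n, byQ A i) = ∏ i : Fin n, bxQ A i :=
  stmt3_general A
end

section
/- Let R = ℤ[x_1,...,x_n]/⟨x_i² − α_i x_i : i=1,...,n⟩ where α_i = Σ_{j<i} a_{i,j} x_j with a_{i,j} ∈ ℤ. Then the set of square-free monomials {x_{i_1}···x_{i_k} : 1 ≤ i_1 < ... < i_k ≤ n} is a ℤ-basis of the degree-2k graded component of R (where each x_i has degree 2). In particular, R is a free ℤ-module of rank 2^n. -/
/-!
Rewriting `x_i² ↦ α_i x_i` moves one unit of exponent from `x_i` to some `x_j` with `j < i`,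
so it strictly decreases the weight `∑ e_i 2^i` of an exponent vector `e` and preserves its degree.
Hence every monomial reduces, modulo the ideal, to a combination of square-free monomials of the
same degree: they span each graded piece.

For independence, reduce exponent vectors to formal combinations of square-free ones, at an
arbitrarily chosen index with exponent `≥ 2`. Reductions at two different indices commute, so by
well-founded induction the result does not depend on that choice (a diamond lemma). The resulting
linear map therefore vanishes on every multiple of a relation, descends to the quotient, and sends
the class of `x_S` to the basis vector `S`.
-/

open MvPolynomial

/-- `α_i = Σ_{j<i} a_{i,j} x_j` as a polynomial. -/
noncomputable def bottAlpha {n : ℕ} (A : Matrix (Fin n) (Fin n) ℤ) (i : Fin n) :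
    MvPolynomial (Fin n) ℤ :=
  ∑ j ∈ Finset.univ.filter (fun j => j < i), C (A i j) * X j

/-- The defining ideal `⟨x_i² − α_i x_i : i = 1,…,n⟩` of the integral cohomology
ring of the Bott manifold determined by the Bott matrix `A`. -/
noncomputable def bottIdeal {n : ℕ} (A : Matrix (Fin n) (Fin n) ℤ) :
    Ideal (MvPolynomial (Fin n) ℤ) :=
  Ideal.span (Set.range fun i : Fin n => X i ^ 2 - bottAlpha A i * X i)

/-- The class `x_i` in `R = ℤ[x_1,…,x_n]/⟨x_i² − α_i x_i⟩`. -/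
noncomputable def bx {n : ℕ} (A : Matrix (Fin n) (Fin n) ℤ) (i : Fin n) :
    MvPolynomial (Fin n) ℤ ⧸ bottIdeal A :=
  Ideal.Quotient.mk _ (X i)

lemma MvPolynomial.monomial_eq_smul_monomial_one {σ R : Type*} [CommSemiring R]
    (e : σ →₀ ℕ) (c : R) : monomial e c = c • monomial e (1 : R) := by
  rw [smul_monomial, smul_eq_mul, mul_one]

lemma Ideal.linearIndependent_quotient_mk {R S ι : Type*} [CommRing R] [CommRing S]
    [Algebra R S] {I : Ideal S} (φ : S →ₗ[R] ι →₀ R) (hφ : ∀ p ∈ I, φ p = 0) {v : ι → S}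
    (hv : ∀ i, φ (v i) = Finsupp.single i 1) :
    LinearIndependent R fun i => Ideal.Quotient.mk I (v i) := by
  let ψ : (S ⧸ I) →ₗ[R] ι →₀ R :=
    (I.restrictScalars R).liftQ φ (fun p hp => LinearMap.mem_ker.mpr (hφ p hp)) ∘ₗ
      (Submodule.Quotient.restrictScalarsEquiv R I).symm.toLinearMap
  have hψ : ψ ∘ (fun i => Ideal.Quotient.mk I (v i)) = fun i => Finsupp.single i 1 :=
    _root_.funext hv
  exact LinearIndependent.of_comp ψ (hψ ▸ Finsupp.linearIndependent_single_one R ι)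

namespace Bott

section Exponents

variable {σ : Type*}

noncomputable def moveUnit (e : σ →₀ ℕ) (i j : σ) : σ →₀ ℕ :=
  e - Finsupp.single i 1 + Finsupp.single j 1

lemma degree_moveUnit (e : σ →₀ ℕ) {i : σ} (j : σ) (hi : 1 ≤ e i) :
    (moveUnit e i j).degree = e.degree := by
  conv_rhs => rw [← tsub_add_cancel_of_le (Finsupp.single_le_iff.mpr hi)]
  simp only [moveUnit, map_add, Finsupp.degree_single]

lemma weight_moveUnit_lt (w : σ → ℕ) (e : σ →₀ ℕ) {i j : σ} (hw : w j < w i) (hi : 1 ≤ e i) :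
    Finsupp.weight w (moveUnit e i j) < Finsupp.weight w e := by
  conv_rhs => rw [← tsub_add_cancel_of_le (Finsupp.single_le_iff.mpr hi)]
  simp only [moveUnit, map_add, Finsupp.weight_single, one_smul]
  omega

noncomputable def indicatorExponent (S : Finset σ) : σ →₀ ℕ :=
  ∑ i ∈ S, Finsupp.single i 1

lemma degree_indicatorExponent (S : Finset σ) : (indicatorExponent S).degree = S.card := by
  simp [indicatorExponent]

lemma monomial_indicatorExponent (R : Type*) [CommSemiring R] (S : Finset σ) :
    monomial (indicatorExponent S) (1 : R) = ∏ i ∈ S, X i :=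
  monomial_sum_one S _

variable [DecidableEq σ]

lemma moveUnit_apply_of_ne (e : σ →₀ ℕ) {i k : σ} (j : σ) (h : i ≠ k) :
    moveUnit e i j k = e k + if j = k then 1 else 0 := by
  simp only [moveUnit, Finsupp.add_apply, Finsupp.tsub_apply, Finsupp.single_apply, if_neg h]
  split_ifs <;> omega

lemma moveUnit_comm (e : σ →₀ ℕ) {i t : σ} (j s : σ) (hit : i ≠ t) (hi : 1 ≤ e i)
    (ht : 1 ≤ e t) : moveUnit (moveUnit e t s) i j = moveUnit (moveUnit e i j) t s := by
  ext k
  simp only [moveUnit, Finsupp.add_apply, Finsupp.tsub_apply, Finsupp.single_apply]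
  split_ifs <;> subst_vars <;> first | exact absurd rfl hit | omega

lemma moveUnit_add_single_two (f : σ →₀ ℕ) (i j : σ) :
    moveUnit (f + Finsupp.single i 2) i j = f + Finsupp.single i 1 + Finsupp.single j 1 := by
  ext k
  simp only [moveUnit, Finsupp.add_apply, Finsupp.tsub_apply, Finsupp.single_apply]
  split_ifs <;> omega

lemma indicatorExponent_apply (S : Finset σ) (k : σ) :
    indicatorExponent S k = if k ∈ S then 1 else 0 := by
  simp [indicatorExponent, Finsupp.finsetSum_apply, Finsupp.single_apply]

lemma support_indicatorExponent (S : Finset σ) : (indicatorExponent S).support = S := by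
  ext k
  simp [indicatorExponent_apply]

lemma indicatorExponent_support_of_forall_le_one {e : σ →₀ ℕ} (h : ∀ i, e i ≤ 1) :
    indicatorExponent e.support = e := by
  ext k
  have := h k
  simp only [indicatorExponent_apply, Finsupp.mem_support_iff]
  split_ifs <;> omega

end Exponents

variable {n : ℕ} (A : Matrix (Fin n) (Fin n) ℤ)

noncomputable def binaryWeight : (Fin n →₀ ℕ) →+ ℕ :=
  Finsupp.weight fun i : Fin n => 2 ^ (i : ℕ)

lemma binaryWeight_moveUnit_lt (e : Fin n →₀ ℕ) {i j : Fin n} (hji : j < i) (hi : 1 ≤ e i) :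
    binaryWeight (moveUnit e i j) < binaryWeight e :=
  weight_moveUnit_lt _ e (Nat.pow_lt_pow_right one_lt_two hji) hi

noncomputable def normalForm (e : Fin n →₀ ℕ) : Finset (Fin n) →₀ ℤ :=
  if h : ∃ i, 2 ≤ e i then
    ∑ j ∈ (Finset.Iio h.choose).attach, A h.choose j • normalForm (moveUnit e h.choose j)
  else Finsupp.single e.support 1
termination_by binaryWeight e
decreasing_by
  exact binaryWeight_moveUnit_lt e (Finset.mem_Iio.mp j.2) (one_le_two.trans h.choose_spec)

lemma normalForm_of_forall_le_one (e : Fin n →₀ ℕ) (h : ∀ i, e i ≤ 1) :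
    normalForm A e = Finsupp.single e.support 1 := by
  rw [normalForm, dif_neg]
  push Not
  exact fun i => Nat.lt_succ_of_le (h i)

lemma normalForm_eq_sum_of_two_le (e : Fin n →₀ ℕ) {i : Fin n} (hi : 2 ≤ e i) :
    normalForm A e = ∑ j ∈ Finset.Iio i, A i j • normalForm A (moveUnit e i j) := by
  induction e using (measure binaryWeight).wf.induction generalizing i with
  | h e IH =>
  have hex : ∃ t, 2 ≤ e t := ⟨i, hi⟩
  rw [normalForm, dif_pos hex,
    Finset.sum_attach (Finset.Iio _) fun j => A _ j • normalForm A (moveUnit e _ j)]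
  set t := hex.choose
  have ht : 2 ≤ e t := hex.choose_spec
  rcases eq_or_ne t i with rfl | hti
  · rfl
  have expand_t : ∀ s ∈ Finset.Iio t, normalForm A (moveUnit e t s) =
      ∑ j ∈ Finset.Iio i, A i j • normalForm A (moveUnit (moveUnit e t s) i j) := by
    intro s hs
    refine IH _ (binaryWeight_moveUnit_lt e (Finset.mem_Iio.mp hs) (by omega)) ?_
    rw [moveUnit_apply_of_ne e s hti]
    omega
  have expand_i : ∀ j ∈ Finset.Iio i, normalForm A (moveUnit e i j) =
      ∑ s ∈ Finset.Iio t, A t s • normalForm A (moveUnit (moveUnit e i j) t s) := by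
    intro j hj
    refine IH _ (binaryWeight_moveUnit_lt e (Finset.mem_Iio.mp hj) (by omega)) ?_
    rw [moveUnit_apply_of_ne e j hti.symm]
    omega
  rw [Finset.sum_congr rfl fun s hs => congrArg (A t s • ·) (expand_t s hs),
    Finset.sum_congr rfl fun j hj => congrArg (A i j • ·) (expand_i j hj)]
  simp only [Finset.smul_sum, smul_smul]
  rw [Finset.sum_comm]
  refine Finset.sum_congr rfl fun j _ => Finset.sum_congr rfl fun s _ => ?_
  rw [mul_comm, moveUnit_comm e j s hti.symm (by omega) (by omega)]

lemma normalForm_indicatorExponent (S : Finset (Fin n)) :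
    normalForm A (indicatorExponent S) = Finsupp.single S 1 := by
  rw [normalForm_of_forall_le_one, support_indicatorExponent]
  intro i
  rw [indicatorExponent_apply]
  split_ifs <;> omega

lemma monomial_mul_relation (f : Fin n →₀ ℕ) (i : Fin n) :
    monomial f 1 * (X i ^ 2 - bottAlpha A i * X i) =
      monomial (f + Finsupp.single i 2) 1 -
        ∑ j ∈ Finset.Iio i, A i j • monomial (moveUnit (f + Finsupp.single i 2) i j) 1 := by
  rw [mul_sub, X_pow_eq_monomial, monomial_mul, mul_one, bottAlpha, Finset.filter_gt_eq_Iio,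
    Finset.sum_mul, Finset.mul_sum]
  congr 1
  refine Finset.sum_congr rfl fun j _ => ?_
  rw [moveUnit_add_single_two, C_mul_X_eq_monomial, X, monomial_mul, monomial_mul, one_mul,
    mul_one, smul_monomial, smul_eq_mul, mul_one, add_assoc, add_comm (Finsupp.single i 1)]

noncomputable def normalFormMap : MvPolynomial (Fin n) ℤ →ₗ[ℤ] Finset (Fin n) →₀ ℤ :=
  (basisMonomials (Fin n) ℤ).constr ℤ (normalForm A)

lemma normalFormMap_monomial (e : Fin n →₀ ℕ) (c : ℤ) :
    normalFormMap A (monomial e c) = c • normalForm A e := by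
  rw [monomial_eq_smul_monomial_one, map_smul]
  exact congrArg (c • ·) ((basisMonomials (Fin n) ℤ).constr_basis ℤ (normalForm A) e)

lemma normalFormMap_mul_relation (q : MvPolynomial (Fin n) ℤ) (i : Fin n) :
    normalFormMap A (q * (X i ^ 2 - bottAlpha A i * X i)) = 0 := by
  induction q using MvPolynomial.induction_on' with
  | monomial f c =>
    rw [monomial_eq_smul_monomial_one, smul_mul_assoc, map_smul,
      monomial_mul_relation, map_sub, map_sum, normalFormMap_monomial, one_smul,
      normalForm_eq_sum_of_two_le A _ (i := i) (by simp), sub_eq_zero.mpr, smul_zero]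
    simp only [map_zsmul, normalFormMap_monomial, one_smul]
  | add p q hp hq => rw [add_mul, map_add, hp, hq, add_zero]

lemma normalFormMap_eq_zero_of_mem {p : MvPolynomial (Fin n) ℤ} (hp : p ∈ bottIdeal A) :
    normalFormMap A p = 0 := by
  obtain ⟨c, rfl⟩ := Ideal.mem_span_range_iff_exists_fun.mp hp
  simp only [map_sum, normalFormMap_mul_relation, Finset.sum_const_zero]

lemma linearIndependent_prod_bx :
    LinearIndependent ℤ fun S : Finset (Fin n) => ∏ i ∈ S, bx A i := by
  simp only [bx, ← map_prod, ← monomial_indicatorExponent]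
  exact Ideal.linearIndependent_quotient_mk (normalFormMap A)
    (fun p => normalFormMap_eq_zero_of_mem A) fun S => by
      rw [normalFormMap_monomial, one_smul, normalForm_indicatorExponent]

lemma mk_monomial_eq_sum_of_two_le (e : Fin n →₀ ℕ) {i : Fin n} (hi : 2 ≤ e i) :
    Ideal.Quotient.mk (bottIdeal A) (monomial e 1) =
      ∑ j ∈ Finset.Iio i,
        A i j • Ideal.Quotient.mk (bottIdeal A) (monomial (moveUnit e i j) 1) := by
  obtain ⟨f, rfl⟩ : ∃ f, e = f + Finsupp.single i 2 :=
    ⟨_, (tsub_add_cancel_of_le (Finsupp.single_le_iff.mpr hi)).symm⟩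
  have hrel : Ideal.Quotient.mk (bottIdeal A)
      (monomial f 1 * (X i ^ 2 - bottAlpha A i * X i)) = 0 :=
    Ideal.Quotient.eq_zero_iff_mem.mpr (Ideal.mul_mem_left _ _ (Ideal.subset_span ⟨i, rfl⟩))
  rw [monomial_mul_relation, map_sub, map_sum, sub_eq_zero] at hrel
  simpa only [map_zsmul] using hrel

lemma mk_monomial_mem_span_prod_bx {k : ℕ} (e : Fin n →₀ ℕ) (he : e.degree = k) :
    Ideal.Quotient.mk (bottIdeal A) (monomial e 1) ∈ Submodule.span ℤ
      (Set.range fun S : {S : Finset (Fin n) // S.card = k} => ∏ i ∈ S.1, bx A i) := by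
  induction e using (measure binaryWeight).wf.induction with
  | h e IH =>
  by_cases h : ∃ i, 2 ≤ e i
  · obtain ⟨i, hi⟩ := h
    rw [mk_monomial_eq_sum_of_two_le A e hi]
    refine Submodule.sum_mem _ fun j hj => Submodule.smul_mem _ _ ?_
    have hei : 1 ≤ e i := by omega
    exact IH _ (binaryWeight_moveUnit_lt e (Finset.mem_Iio.mp hj) hei)
      (by rw [degree_moveUnit e j hei, he])
  · push Not at h
    have hsq : indicatorExponent e.support = e :=
      indicatorExponent_support_of_forall_le_one fun i => Nat.le_of_lt_succ (h i)
    refine Submodule.subset_span ⟨⟨e.support, ?_⟩, ?_⟩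
    · rw [← degree_indicatorExponent, hsq, he]
    · simp only [bx, ← map_prod, ← monomial_indicatorExponent, hsq]

lemma span_prod_bx_eq_map_homogeneousSubmodule (k : ℕ) :
    Submodule.span ℤ
        (Set.range fun S : {S : Finset (Fin n) // S.card = k} => ∏ i ∈ S.1, bx A i) =
      Submodule.map (Ideal.Quotient.mkₐ ℤ (bottIdeal A)).toLinearMap
        (homogeneousSubmodule (Fin n) ℤ k) := by
  rw [homogeneousSubmodule_eq_finsupp_supported, AddMonoidAlgebra.supported_eq_span_single,
    Submodule.map_span]
  refine le_antisymm (Submodule.span_le.mpr ?_) (Submodule.span_le.mpr ?_)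
  · rintro _ ⟨⟨S, hS⟩, rfl⟩
    refine Submodule.subset_span
      ⟨_, ⟨indicatorExponent S, (degree_indicatorExponent S).trans hS, rfl⟩, ?_⟩
    simp only [bx, ← map_prod, ← monomial_indicatorExponent]
    rfl
  · rintro _ ⟨_, ⟨d, hd, rfl⟩, rfl⟩
    exact mk_monomial_mem_span_prod_bx A d hd

lemma span_prod_bx_eq_top :
    Submodule.span ℤ (Set.range fun S : Finset (Fin n) => ∏ i ∈ S, bx A i) = ⊤ := by
  refine Submodule.eq_top_iff'.mpr fun x => ?_
  obtain ⟨p, rfl⟩ := Ideal.Quotient.mk_surjective x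
  induction p using MvPolynomial.induction_on' with
  | monomial e c =>
    rw [monomial_eq_smul_monomial_one, map_zsmul]
    refine Submodule.smul_mem _ _ (Submodule.span_mono ?_ (mk_monomial_mem_span_prod_bx A e rfl))
    exact Set.range_subset_iff.mpr fun S => ⟨S.1, rfl⟩
  | add p q hp hq => rw [map_add]; exact Submodule.add_mem _ hp hq

noncomputable def squarefreeBasis :
    Module.Basis (Finset (Fin n)) ℤ (MvPolynomial (Fin n) ℤ ⧸ bottIdeal A) :=
  Module.Basis.mk (linearIndependent_prod_bx A) (span_prod_bx_eq_top A).ge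

lemma squarefreeBasis_apply (S : Finset (Fin n)) : squarefreeBasis A S = ∏ i ∈ S, bx A i :=
  Module.Basis.mk_apply _ _ S

end Bott

theorem stmt4_general {n : ℕ} (A : Matrix (Fin n) (Fin n) ℤ) :
    (∀ k : ℕ,
      LinearIndependent ℤ
        (fun S : {S : Finset (Fin n) // S.card = k} => ∏ i ∈ S.1, bx A i) ∧
      Submodule.span ℤ
          (Set.range fun S : {S : Finset (Fin n) // S.card = k} =>
            ∏ i ∈ S.1, bx A i)
        = Submodule.map (Ideal.Quotient.mkₐ ℤ (bottIdeal A)).toLinearMap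
            (MvPolynomial.homogeneousSubmodule (Fin n) ℤ k)) ∧
    (∃ b : Module.Basis (Finset (Fin n)) ℤ (MvPolynomial (Fin n) ℤ ⧸ bottIdeal A),
      ∀ S : Finset (Fin n), b S = ∏ i ∈ S, bx A i) ∧
    Module.rank ℤ (MvPolynomial (Fin n) ℤ ⧸ bottIdeal A) = 2 ^ n := by
  refine ⟨fun k => ⟨?_, Bott.span_prod_bx_eq_map_homogeneousSubmodule A k⟩,
    ⟨Bott.squarefreeBasis A, Bott.squarefreeBasis_apply A⟩, ?_⟩
  · exact (Bott.linearIndependent_prod_bx A).comp Subtype.val Subtype.val_injective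
  · rw [rank_eq_card_basis (Bott.squarefreeBasis A), Fintype.card_finset, Fintype.card_fin]
    norm_cast

/-- The square-free monomials `x_{i₁} ⋯ x_{i_k}` with
`i₁ < ⋯ < i_k` form a `ℤ`-basis of the degree-`2k` graded component of
`R = ℤ[x_1,…,x_n]/⟨x_i² − α_i x_i⟩` (each `x_i` being of cohomological degree 2,
i.e. polynomial degree `k` corresponds to cohomological degree `2k`):
they are linearly independent and span the image of the homogeneous
polynomials of degree `k`.  In particular `R` is a free `ℤ`-module with
basis indexed by subsets of `{1,…,n}`, of rank `2^n`. -/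
theorem stmt4 {n : ℕ} (A : Matrix (Fin n) (Fin n) ℤ)
    (hlt : ∀ i j : Fin n, i < j → A i j = 0)
    (hdiag : ∀ i : Fin n, A i i = -1) :
    (∀ k : ℕ,
      LinearIndependent ℤ
        (fun S : {S : Finset (Fin n) // S.card = k} => ∏ i ∈ S.1, bx A i) ∧
      Submodule.span ℤ
          (Set.range fun S : {S : Finset (Fin n) // S.card = k} =>
            ∏ i ∈ S.1, bx A i)
        = Submodule.map (Ideal.Quotient.mkₐ ℤ (bottIdeal A)).toLinearMap
            (MvPolynomial.homogeneousSubmodule (Fin n) ℤ k)) ∧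
    (∃ b : Module.Basis (Finset (Fin n)) ℤ (MvPolynomial (Fin n) ℤ ⧸ bottIdeal A),
      ∀ S : Finset (Fin n), b S = ∏ i ∈ S, bx A i) ∧
    Module.rank ℤ (MvPolynomial (Fin n) ℤ ⧸ bottIdeal A) = 2 ^ n :=
  stmt4_general A
end

section
/- Let π be a permutation of {1,...,n} and A a Bott matrix such that A_π := P_π A P_π^{-1} is again a Bott matrix (lower triangular with -1 diagonal), where P_π is the permutation matrix of π. Then the map φ_π defined on generators by φ_π(x_i) = x'_{π(i)} induces a graded ring isomorphism from ℤ[x_1,...,x_n]/⟨x_i² − α_i^A x_i⟩ to ℤ[x'_1,...,x'_n]/⟨x'_i² − α_i^{A_π} x'_i⟩, satisfying φ_π(2x_i − α_i^A) = 2x'_{π(i)} − α_{π(i)}^{A_π} for all i. -/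
open MvPolynomial

/-- The class `α_i` in `R`. -/
noncomputable def ba {n : ℕ} (A : Matrix (Fin n) (Fin n) ℤ) (i : Fin n) :
    MvPolynomial (Fin n) ℤ ⧸ bottIdeal A :=
  Ideal.Quotient.mk _ (bottAlpha A i)

section BottRename

variable {n : ℕ}

lemma bottAlpha_eq_sum_erase {A : Matrix (Fin n) (Fin n) ℤ}
    (hlt : ∀ i j : Fin n, i < j → A i j = 0) (i : Fin n) :
    bottAlpha A i = ∑ j ∈ Finset.univ.erase i, C (A i j) * X j := by
  rw [bottAlpha, ← Finset.filter_ne']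
  refine Finset.sum_subset (fun j hj => ?_) fun j hj hji => ?_
  · simp only [Finset.mem_filter, Finset.mem_univ, true_and] at hj ⊢
    exact hj.ne
  · simp only [Finset.mem_filter, Finset.mem_univ, true_and, not_lt] at hj hji
    rw [hlt i j (lt_of_le_of_ne hji (Ne.symm hj)), C_0, zero_mul]

-- `π` need not preserve the order, so both strict-lower sums are first rewritten over `j ≠ i`.
lemma rename_bottAlpha {A Aπ : Matrix (Fin n) (Fin n) ℤ} {π : Equiv.Perm (Fin n)}
    (hlt : ∀ i j : Fin n, i < j → A i j = 0)
    (hAπ : ∀ i j : Fin n, Aπ i j = A (π.symm i) (π.symm j))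
    (hlt' : ∀ i j : Fin n, i < j → Aπ i j = 0) (i : Fin n) :
    rename π (bottAlpha A i) = bottAlpha Aπ (π i) := by
  rw [bottAlpha_eq_sum_erase hlt, bottAlpha_eq_sum_erase hlt', map_sum]
  refine Finset.sum_equiv π (fun j => by simp) fun j _ => ?_
  rw [map_mul, rename_C, rename_X, hAπ, Equiv.symm_apply_apply, Equiv.symm_apply_apply]

lemma bottIdeal_map_rename {A Aπ : Matrix (Fin n) (Fin n) ℤ} {π : Equiv.Perm (Fin n)}
    (hlt : ∀ i j : Fin n, i < j → A i j = 0)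
    (hAπ : ∀ i j : Fin n, Aπ i j = A (π.symm i) (π.symm j))
    (hlt' : ∀ i j : Fin n, i < j → Aπ i j = 0) :
    (bottIdeal A).map (rename π : MvPolynomial (Fin n) ℤ →ₐ[ℤ] _) = bottIdeal Aπ := by
  have hgen : (rename π ∘ fun i : Fin n => X i ^ 2 - bottAlpha A i * X i)
      = (fun i : Fin n => X i ^ 2 - bottAlpha Aπ i * X i) ∘ π := by
    funext i
    simp only [Function.comp_apply, map_sub, map_mul, map_pow, rename_X,
      rename_bottAlpha hlt hAπ hlt' i]
  rw [bottIdeal, bottIdeal, Ideal.map_span, ← Set.range_comp, hgen, Set.range_comp,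
    Equiv.range_eq_univ, Set.image_univ]

lemma two_mul_bx_sub_ba (B : Matrix (Fin n) (Fin n) ℤ) (i : Fin n) :
    2 * bx B i - ba B i = Ideal.Quotient.mk (bottIdeal B) (2 * X i - bottAlpha B i) := by
  rw [bx, ba, map_sub, map_mul, map_ofNat]

end BottRename

theorem stmt6_general {n : ℕ} (A Aπ : Matrix (Fin n) (Fin n) ℤ)
    (π : Equiv.Perm (Fin n))
    (hlt : ∀ i j : Fin n, i < j → A i j = 0)
    (hAπ : ∀ i j : Fin n, Aπ i j = A (π.symm i) (π.symm j))
    (hlt' : ∀ i j : Fin n, i < j → Aπ i j = 0) :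
    ∃ φ : (MvPolynomial (Fin n) ℤ ⧸ bottIdeal A) ≃+*
          (MvPolynomial (Fin n) ℤ ⧸ bottIdeal Aπ),
      (∀ i : Fin n, φ (bx A i) = bx Aπ (π i)) ∧
      (∀ i : Fin n,
        φ (2 * bx A i - ba A i) = 2 * bx Aπ (π i) - ba Aπ (π i)) := by
  let e := (renameEquiv ℤ π).toRingEquiv
  have hmap : bottIdeal Aπ = (bottIdeal A).map (e : MvPolynomial (Fin n) ℤ →+* _) :=
    (bottIdeal_map_rename hlt hAπ hlt').symm
  refine ⟨Ideal.quotientEquiv _ _ e hmap, fun i => ?_, fun i => ?_⟩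
  · rw [bx, Ideal.quotientEquiv_mk, bx]
    exact congrArg _ (rename_X π i)
  · rw [two_mul_bx_sub_ba, two_mul_bx_sub_ba, Ideal.quotientEquiv_mk]
    refine congrArg _ ?_
    change rename π _ = _
    rw [map_sub, map_mul, rename_X, rename_bottAlpha hlt hAπ hlt' i, map_ofNat]

/-- Let `π` be a permutation of `{1,…,n}` and `A` a Bott matrix
such that `A_π := P_π A P_π⁻¹`, i.e. the matrix with entries
`(A_π)_{i,j} = a_{π⁻¹(i),π⁻¹(j)}`, is again a Bott matrix (lower triangular with
`-1` diagonal).  Then `x_i ↦ x'_{π(i)}` induces a (graded) ring isomorphism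
`φ_π : R ≃ R'` with `φ_π(2x_i − α_i^A) = 2x'_{π(i)} − α^{A_π}_{π(i)}` for all `i`. -/
theorem stmt6 {n : ℕ} (A Aπ : Matrix (Fin n) (Fin n) ℤ)
    (π : Equiv.Perm (Fin n))
    (hlt : ∀ i j : Fin n, i < j → A i j = 0)
    (hdiag : ∀ i : Fin n, A i i = -1)
    (hAπ : ∀ i j : Fin n, Aπ i j = A (π.symm i) (π.symm j))
    (hlt' : ∀ i j : Fin n, i < j → Aπ i j = 0)
    (hdiag' : ∀ i : Fin n, Aπ i i = -1) :
    ∃ φ : (MvPolynomial (Fin n) ℤ ⧸ bottIdeal A) ≃+*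
          (MvPolynomial (Fin n) ℤ ⧸ bottIdeal Aπ),
      (∀ i : Fin n, φ (bx A i) = bx Aπ (π i)) ∧
      (∀ i : Fin n,
        φ (2 * bx A i - ba A i) = 2 * bx Aπ (π i) - ba Aπ (π i)) :=
  stmt6_general A Aπ π hlt hAπ hlt'
end

section
/- Let A be a Bott matrix and for each subset J ⊆ {1,...,n} define the cone σ_J in ℝ^n generated by {e_j : j ∈ J} ∪ {v_j : j ∉ J}, where v_j is the j-th column of A. Then for any I ⊆ {1,...,n}, the linear map given by L_I^{-1} sends each cone σ_J of the fan Σ_A bijectively onto a maximal cone of the fan Σ_{A_I}; in particular, L_I^{-1} maps σ_I onto the first quadrant Cone(e_1,...,e_n). -/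
/-- The `j`-th ray generator of the maximal cone `σ_J` of the fan `Σ_A`, viewed
in `ℝⁿ`: the standard basis vector `e_j` if `j ∈ J` and the `j`-th column `v_j`
of `A` if `j ∉ J`. -/
def rayGen {n : ℕ} (A : Matrix (Fin n) (Fin n) ℤ) (J : Finset (Fin n))
    (j : Fin n) : Fin n → ℝ :=
  if j ∈ J then (fun i => if i = j then 1 else 0) else fun i => (A i j : ℝ)

/-- The maximal cone `σ_J = Cone({e_j : j ∈ J} ∪ {v_j : j ∉ J}) ⊆ ℝⁿ` of the
fan `Σ_A`, described as the set of nonnegative linear combinations of its ray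
generators. -/
def coneOf {n : ℕ} (A : Matrix (Fin n) (Fin n) ℤ) (J : Finset (Fin n)) :
    Set (Fin n → ℝ) :=
  {x | ∃ t : Fin n → ℝ, (∀ j, 0 ≤ t j) ∧ x = ∑ j : Fin n, t j • rayGen A J j}

/-!
The `j`-th column of `L_J` is that of `L_I` when `j ∈ J ↔ j ∈ I` and that of `L_{Iᶜ}`
otherwise. Hence `L_I⁻¹ L_J = L_{J'}` computed from `A_I = L_I⁻¹ L_{Iᶜ}`, where
`J' = {j | j ∈ J ↔ j ∈ I}`: the map `L_I⁻¹` sends the ray generators of `σ_J` to those of the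
cone `σ_{J'}` of `Σ_{A_I}`, and `J = I` gives `J' = univ`. It is invertible because `L_I` is
lower triangular with diagonal entries `±1`.
-/

namespace Lmat

variable {n : ℕ}

lemma isLowerTriangular {A : Matrix (Fin n) (Fin n) ℤ} (hA : A.IsLowerTriangular)
    (I : Finset (Fin n)) : (Lmat A I).IsLowerTriangular := by
  intro i j hij
  have hne : i ≠ j := (show i < j from hij).ne
  by_cases hj : j ∈ I <;> simp [Lmat, hj, hne, hA hij]

lemma isUnit_det {A : Matrix (Fin n) (Fin n) ℤ} (hA : A.IsLowerTriangular)
    (hdiag : ∀ i, IsUnit (A i i)) (I : Finset (Fin n)) : IsUnit (Lmat A I).det := by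
  rw [Matrix.det_of_isLowerTriangular _ (isLowerTriangular hA I)]
  refine IsUnit.prod_univ_iff.mpr fun i => ?_
  by_cases hi : i ∈ I <;> simp [Lmat, hi, hdiag i]

lemma mul_Lmat_of_mul_eq_one {A B : Matrix (Fin n) (Fin n) ℤ} {I : Finset (Fin n)}
    (hB : B * Lmat A I = 1) (J : Finset (Fin n)) :
    B * Lmat A J = Lmat (B * Lmat A Iᶜ) {j | j ∈ J ↔ j ∈ I} := by
  ext i j
  by_cases hJI : j ∈ J ↔ j ∈ I
  · have hcol : ∀ k, Lmat A J k j = Lmat A I k j := by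
      intro k
      by_cases hj : j ∈ J <;> simp [Lmat, hj, ← hJI]
    simpa [Matrix.mul_apply, hcol, Lmat, hJI, Matrix.one_apply] using congrFun (congrFun hB i) j
  · have hcol : ∀ k, Lmat A J k j = Lmat A Iᶜ k j := by
      intro k
      by_cases hj : j ∈ J <;> simp_all [Lmat]
    rw [show Lmat (B * Lmat A Iᶜ) _ i j = (B * Lmat A Iᶜ) i j by simp [Lmat, hJI]]
    simp only [Matrix.mul_apply, hcol]

end Lmat

section Cones

variable {n : ℕ}

lemma rayGen_eq_col (A : Matrix (Fin n) (Fin n) ℤ) (J : Finset (Fin n)) (j : Fin n) :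
    rayGen A J j = fun i => (Lmat A J i j : ℝ) := by
  ext i
  by_cases hj : j ∈ J
  · by_cases hij : i = j <;> simp [rayGen, Lmat, hj, hij]
  · simp [rayGen, Lmat, hj]

lemma mulVec_rayGen (B A : Matrix (Fin n) (Fin n) ℤ) (J : Finset (Fin n)) (j : Fin n) :
    (B.map (Int.cast : ℤ → ℝ)).mulVec (rayGen A J j) = fun i => ((B * Lmat A J) i j : ℝ) := by
  ext i
  simp [rayGen_eq_col, Matrix.mulVec, dotProduct, Matrix.mul_apply]

lemma image_mulVec_coneOf {M : Matrix (Fin n) (Fin n) ℝ} {A A' : Matrix (Fin n) (Fin n) ℤ}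
    {J J' : Finset (Fin n)} (h : ∀ j, M.mulVec (rayGen A J j) = rayGen A' J' j) :
    M.mulVec '' coneOf A J = coneOf A' J' := by
  ext y
  simp only [coneOf, Set.mem_image, Set.mem_ofPred_eq]
  constructor
  · rintro ⟨_, ⟨t, ht, rfl⟩, rfl⟩
    exact ⟨t, ht, by simp [Matrix.mulVec_sum, Matrix.mulVec_smul, h]⟩
  · rintro ⟨t, ht, rfl⟩
    exact ⟨_, ⟨t, ht, rfl⟩, by simp [Matrix.mulVec_sum, Matrix.mulVec_smul, h]⟩

end Cones

/-- For a Bott matrix `A` and any `I ⊆ {1,…,n}`, the linear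
map given by `L_I⁻¹` is bijective and sends each maximal cone `σ_J` of `Σ_A`
onto a maximal cone of `Σ_{A_I}`, where `A_I = L_I⁻¹ L_{Iᶜ}`; in particular it
sends `σ_I` onto the first quadrant `Cone(e_1,…,e_n)`. -/
theorem stmt11 {n : ℕ} (A : Matrix (Fin n) (Fin n) ℤ)
    (hlt : ∀ i j : Fin n, i < j → A i j = 0)
    (hdiag : ∀ i : Fin n, A i i = -1)
    (I : Finset (Fin n)) :
    Function.Bijective
      (fun x : Fin n → ℝ => (((Lmat A I)⁻¹).map (Int.cast : ℤ → ℝ)).mulVec x) ∧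
    (∀ J : Finset (Fin n), ∃ J' : Finset (Fin n),
      (fun x : Fin n → ℝ => (((Lmat A I)⁻¹).map (Int.cast : ℤ → ℝ)).mulVec x) ''
          coneOf A J
        = coneOf ((Lmat A I)⁻¹ * Lmat A Iᶜ) J') ∧
    (fun x : Fin n → ℝ => (((Lmat A I)⁻¹).map (Int.cast : ℤ → ℝ)).mulVec x) ''
        coneOf A I
      = coneOf ((Lmat A I)⁻¹ * Lmat A Iᶜ) Finset.univ := by
  have hdet : IsUnit (Lmat A I).det :=
    Lmat.isUnit_det (fun i j hij => hlt i j hij) (fun i => by simp [hdiag i]) I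
  have hinv : (Lmat A I)⁻¹ * Lmat A I = 1 := Matrix.nonsing_inv_mul _ hdet
  have hunit : IsUnit (((Lmat A I)⁻¹).map (Int.castRingHom ℝ)) :=
    ((Matrix.isUnit_iff_isUnit_det _).mpr (Matrix.isUnit_nonsing_inv_det _ hdet)).map
      (Int.castRingHom ℝ).mapMatrix
  have himage : ∀ J, (((Lmat A I)⁻¹).map (Int.cast : ℤ → ℝ)).mulVec '' coneOf A J
      = coneOf ((Lmat A I)⁻¹ * Lmat A Iᶜ) {j | j ∈ J ↔ j ∈ I} := fun J =>
    image_mulVec_coneOf fun j => by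
      rw [mulVec_rayGen, Lmat.mul_Lmat_of_mul_eq_one hinv, rayGen_eq_col]
  refine ⟨⟨Matrix.mulVec_injective_iff_isUnit.mpr hunit,
    Matrix.mulVec_surjective_iff_isUnit.mpr hunit⟩, fun J => ⟨_, himage J⟩, ?_⟩
  simpa using himage I
end

section
/- Consider the Hirzebruch surface cohomology rings H = ℤ[x_1,x_2]/⟨x_1², x_2²⟩ (for H_0) and H' = ℤ[x'_1,x'_2]/⟨(x'_1)², x'_2(x'_2 − 2x'_1)⟩ (for H_2). The map φ' defined by φ'(x_1) = x'_1, φ'(x_2) = x'_2 − x'_1 is a graded ring isomorphism H → H', and it sends 2x_1 + 2x_2 to 2x'_2, i.e., it preserves the first Chern classes c_1(H_0) = 2x_1 + 2x_2 and c_1(H_2) = 2x'_2. -/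
/-!
The substitution `x₁ ↦ x₁`, `x₂ ↦ x₂ − x₁` is an automorphism of `ℤ[x₁, x₂]` (its inverse is
`x₂ ↦ x₂ + x₁`), and it carries the relations `x₁², x₂²` of `H` to `x₁², (x₂ − x₁)²`. Since
`(x₂ − x₁)² = x₂(x₂ − 2x₁) + x₁²`, these generate the same ideal as the relations of `H'`, so the
substitution descends to an isomorphism `H ≃+* H'`; it is linear in the generators, hence graded,
and `2x₁ + 2(x₂ − x₁) = 2x₂`.
-/

open MvPolynomial

/-- The integral cohomology ring `H = ℤ[x₁,x₂]/⟨x₁², x₂²⟩` of the Hirzebruch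
surface `H₀ = ℂP¹ × ℂP¹`. -/
noncomputable abbrev HirzebruchZero : Type :=
  MvPolynomial (Fin 2) ℤ ⧸
    Ideal.span ({X 0 ^ 2, X 1 ^ 2} : Set (MvPolynomial (Fin 2) ℤ))

/-- The integral cohomology ring `H' = ℤ[x'₁,x'₂]/⟨x'₁², x'₂(x'₂ − 2x'₁)⟩` of the
Hirzebruch surface `H₂ = P(O ⊕ O(2))`. -/
noncomputable abbrev HirzebruchTwo : Type :=
  MvPolynomial (Fin 2) ℤ ⧸
    Ideal.span ({X 0 ^ 2, X 1 * (X 1 - 2 * X 0)} : Set (MvPolynomial (Fin 2) ℤ))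

namespace MvPolynomial

variable {R : Type*} [CommRing R]

noncomputable def shear : MvPolynomial (Fin 2) R ≃ₐ[R] MvPolynomial (Fin 2) R :=
  AlgEquiv.ofAlgHom (aeval ![X 0, X 1 - X 0]) (aeval ![X 0, X 1 + X 0])
    (algHom_ext fun i => by fin_cases i <;> simp)
    (algHom_ext fun i => by fin_cases i <;> simp)

@[simp] lemma shear_X_zero : shear (X 0 : MvPolynomial (Fin 2) R) = X 0 := by simp [shear]

@[simp] lemma shear_X_one : shear (X 1 : MvPolynomial (Fin 2) R) = X 1 - X 0 := by simp [shear]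

lemma map_shear_span_sq :
    (Ideal.span {X 0 ^ 2, X 1 ^ 2} : Ideal (MvPolynomial (Fin 2) R)).map shear =
      Ideal.span {X 0 ^ 2, X 1 * (X 1 - 2 * X 0)} := by
  have hsq : ((X 1 - X 0) ^ 2 : MvPolynomial (Fin 2) R) = X 1 * (X 1 - 2 * X 0) + 1 * X 0 ^ 2 := by
    ring
  rw [Ideal.map_span, Set.image_pair, map_pow, map_pow, shear_X_zero, shear_X_one, hsq,
    Ideal.span_pair_add_mul_left]

end MvPolynomial

noncomputable def hirzebruchEquiv : HirzebruchZero ≃+* HirzebruchTwo :=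
  Ideal.quotientEquiv _ _ shear.toRingEquiv map_shear_span_sq.symm

lemma hirzebruchEquiv_mk (p : MvPolynomial (Fin 2) ℤ) :
    hirzebruchEquiv (Ideal.Quotient.mk _ p) = Ideal.Quotient.mk _ (shear p) :=
  Ideal.quotientEquiv_mk _ _ _ _ p

lemma hirzebruchEquiv_mk_X_zero :
    hirzebruchEquiv (Ideal.Quotient.mk _ (X 0)) = Ideal.Quotient.mk _ (X 0) := by
  rw [hirzebruchEquiv_mk, shear_X_zero]

lemma hirzebruchEquiv_mk_X_one :
    hirzebruchEquiv (Ideal.Quotient.mk _ (X 1))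
      = Ideal.Quotient.mk _ (X 1) - Ideal.Quotient.mk _ (X 0) := by
  rw [hirzebruchEquiv_mk, shear_X_one, map_sub]

/-- The map `φ'` with `φ'(x₁) = x'₁` and `φ'(x₂) = x'₂ − x'₁`
is a (graded) ring isomorphism `H → H'` sending `2x₁ + 2x₂` to `2x'₂`, i.e. it
preserves the first Chern classes `c₁(H₀) = 2x₁ + 2x₂` and `c₁(H₂) = 2x'₂`. -/
theorem stmt12 :
    ∃ φ : HirzebruchZero ≃+* HirzebruchTwo,
      φ (Ideal.Quotient.mk _ (X 0)) = Ideal.Quotient.mk _ (X 0) ∧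
      φ (Ideal.Quotient.mk _ (X 1))
        = Ideal.Quotient.mk _ (X 1) - Ideal.Quotient.mk _ (X 0) ∧
      φ (2 * Ideal.Quotient.mk _ (X 0) + 2 * Ideal.Quotient.mk _ (X 1))
        = 2 * Ideal.Quotient.mk _ (X 1) := by
  refine ⟨hirzebruchEquiv, hirzebruchEquiv_mk_X_zero, hirzebruchEquiv_mk_X_one, ?_⟩
  rw [map_add, map_mul, map_mul, map_ofNat, hirzebruchEquiv_mk_X_zero, hirzebruchEquiv_mk_X_one]
  ring
end

section
/- Consider the rings H = ℤ[x_1,x_2]/⟨x_1², x_2²⟩ and H' = ℤ[x'_1,x'_2]/⟨(x'_1)², x'_2(x'_2 − 2x'_1)⟩. The map φ defined by φ(x_1) = x'_1, φ(x_2) = x'_1 − x'_2 is a graded ring isomorphism H → H' that does NOT send 2x_1 + 2x_2 to 2x'_2 (it sends it to 4x'_1 − 2x'_2 ≠ 2x'_2). -/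
open MvPolynomial

@[simp]
lemma TrivSqZeroExt.fst_ofNat {R M : Type*} [AddMonoidWithOne R] [AddMonoid M] (n : ℕ)
    [n.AtLeastTwo] : (ofNat(n) : TrivSqZeroExt R M).fst = ofNat(n) :=
  rfl

namespace MvPolynomial

variable {R : Type*} [CommRing R]

noncomputable def secondToDiff : MvPolynomial (Fin 2) R →ₐ[R] MvPolynomial (Fin 2) R :=
  aeval ![X 0, X 0 - X 1]

@[simp]
lemma secondToDiff_X_zero : secondToDiff (X 0 : MvPolynomial (Fin 2) R) = X 0 := by
  simp [secondToDiff]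

@[simp]
lemma secondToDiff_X_one : secondToDiff (X 1 : MvPolynomial (Fin 2) R) = X 0 - X 1 := by
  simp [secondToDiff]

lemma secondToDiff_comp_self :
    (secondToDiff : MvPolynomial (Fin 2) R →ₐ[R] _).comp secondToDiff = AlgHom.id R _ := by
  ext i
  fin_cases i <;> simp

noncomputable def secondToDiffEquiv : MvPolynomial (Fin 2) R ≃ₐ[R] MvPolynomial (Fin 2) R :=
  AlgEquiv.ofAlgHom secondToDiff secondToDiff secondToDiff_comp_self secondToDiff_comp_self

lemma secondToDiffEquiv_apply (p : MvPolynomial (Fin 2) R) :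
    secondToDiffEquiv p = secondToDiff p :=
  rfl

lemma map_secondToDiffEquiv_span_sq :
    Ideal.map secondToDiffEquiv (Ideal.span {X 0 ^ 2, X 1 ^ 2} : Ideal (MvPolynomial (Fin 2) R))
      = Ideal.span {X 0 ^ 2, X 1 * (X 1 - 2 * X 0)} := by
  have h : (X 0 - X 1 : MvPolynomial (Fin 2) R) ^ 2 = X 1 * (X 1 - 2 * X 0) + X 0 ^ 2 := by ring
  rw [Ideal.map_span, Set.image_pair, secondToDiffEquiv_apply, secondToDiffEquiv_apply, map_pow,
    map_pow, secondToDiff_X_zero, secondToDiff_X_one, h, Ideal.span_pair_add_left]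

end MvPolynomial

noncomputable def hirzebruchZeroEquivTwo : HirzebruchZero ≃+* HirzebruchTwo :=
  Ideal.quotientEquiv _ _ secondToDiffEquiv.toRingEquiv map_secondToDiffEquiv_span_sq.symm

lemma hirzebruchZeroEquivTwo_mk (p : MvPolynomial (Fin 2) ℤ) :
    hirzebruchZeroEquivTwo (Ideal.Quotient.mk _ p) = Ideal.Quotient.mk _ (secondToDiff p) :=
  rfl

noncomputable def HirzebruchTwo.toDualNumber : HirzebruchTwo →+* DualNumber ℤ :=
  Ideal.Quotient.lift _ (aeval ![0, DualNumber.eps]).toRingHom <| by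
    suffices h : _ ≤ RingHom.ker (aeval ![(0 : DualNumber ℤ), DualNumber.eps]).toRingHom from
      fun a ha => h ha
    rw [Ideal.span_le, Set.pair_subset_iff]
    simp [sq]

@[simp]
lemma HirzebruchTwo.toDualNumber_mk (p : MvPolynomial (Fin 2) ℤ) :
    HirzebruchTwo.toDualNumber (Ideal.Quotient.mk _ p) = aeval ![0, DualNumber.eps] p :=
  rfl

/-- The map `φ` with `φ(x₁) = x'₁` and `φ(x₂) = x'₁ − x'₂` is
a (graded) ring isomorphism `H → H'` which does NOT send `2x₁ + 2x₂` to `2x'₂`: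
it sends it to `4x'₁ − 2x'₂`, and `4x'₁ − 2x'₂ ≠ 2x'₂` in `H'`. -/
theorem stmt13 :
    ∃ φ : HirzebruchZero ≃+* HirzebruchTwo,
      φ (Ideal.Quotient.mk _ (X 0)) = Ideal.Quotient.mk _ (X 0) ∧
      φ (Ideal.Quotient.mk _ (X 1))
        = Ideal.Quotient.mk _ (X 0) - Ideal.Quotient.mk _ (X 1) ∧
      φ (2 * Ideal.Quotient.mk _ (X 0) + 2 * Ideal.Quotient.mk _ (X 1))
        = 4 * Ideal.Quotient.mk _ (X 0) - 2 * Ideal.Quotient.mk _ (X 1) ∧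
      (4 * (Ideal.Quotient.mk _ (X 0) : HirzebruchTwo)
          - 2 * Ideal.Quotient.mk _ (X 1))
        ≠ 2 * Ideal.Quotient.mk _ (X 1) := by
  have hx₁ := hirzebruchZeroEquivTwo_mk (X 0)
  have hx₂ := hirzebruchZeroEquivTwo_mk (X 1)
  rw [secondToDiff_X_zero] at hx₁
  rw [secondToDiff_X_one, map_sub] at hx₂
  refine ⟨hirzebruchZeroEquivTwo, hx₁, hx₂, ?_, fun h => ?_⟩
  · rw [map_add, map_mul, map_mul, hx₁, hx₂, map_ofNat]
    ring
  · have := congrArg (fun x => (HirzebruchTwo.toDualNumber x).snd) h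
    simp [map_ofNat] at this
end

section
/- Let R' be the cohomology ring ℤ[x'_1,...,x'_n]/⟨x'_i² − α'_i x'_i⟩ of a Bott manifold and let c_j, a_{k,j} be integers for j < k such that (Σ_{j<k} c_j x'_j)(Σ_{j<k}(c_j − a_{k,j})x'_j) = 0 in R', and such that for each j, either c_j = 0 or c_j = a_{k,j} with a_{k,j} ∈ {−1,1}. Then for every ℓ < k with c_ℓ = 0 and some j < k with c_j ≠ 0, one has a_{k,ℓ} = 0; i.e., c_j ≠ 0 for some j implies a_{k,ℓ} = 0 whenever c_ℓ = 0. -/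
open MvPolynomial

/-! The ideal is generated by the homogeneous quadrics `x_i² − α_i x_i`, and since `α_i` only
involves the `x_j` with `j < i`, their `x_i²`-coefficients form the identity matrix. Writing an
element of the ideal as `∑ q_i (x_i² − α_i x_i)`, its degree-two part is `∑ q_i(0) (x_i² − α_i x_i)`,
and `q_i(0)` is its `x_i²`-coefficient; so if it has no `x_i²` terms, its degree-two part vanishes.
The product of the two linear forms has `x_j²`-coefficient `c_j (c_j − a_{k,j}) = 0`, hence its
coefficient `−c_j a_{k,ℓ}` at `x_j x_ℓ` vanishes as well. -/

theorem Finsupp.single_one_add_single_one_eq_iff {σ : Type*} {p q i j : σ} :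
    single p 1 + single q 1 = single i 1 + single j 1 ↔
      p = i ∧ q = j ∨ p = j ∧ q = i := by
  rw [Finsupp.single_add_single_eq_single_add_single one_ne_zero one_ne_zero]
  constructor
  · rintro (h | ⟨-, h⟩ | ⟨h, -⟩)
    · exact .inl h
    · exact .inr h
    · simp at h
  · rintro (h | h)
    · exact .inl h
    · exact .inr (.inl ⟨rfl, h⟩)

namespace MvPolynomial

variable {σ R : Type*} [CommSemiring R]

theorem IsHomogeneous.coeff_mul_of_degree_eq {p g : MvPolynomial σ R} {n : ℕ}
    (hg : g.IsHomogeneous n) {m : σ →₀ ℕ} (hm : m.degree = n) :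
    coeff m (p * g) = coeff 0 p * coeff m g := by
  classical
  rw [coeff_mul, Finset.sum_eq_single (0, m)]
  · rintro ⟨e, f⟩ hef hne
    rw [Finset.HasAntidiagonal.mem_antidiagonal] at hef
    dsimp only at hef ⊢
    by_cases hf : coeff f g = 0
    · rw [hf, mul_zero]
    have hdeg : f.degree = n := by rw [Finsupp.degree_eq_weight_one]; exact hg hf
    have he : e = 0 := by
      rw [← Finsupp.degree_eq_zero_iff]
      have := congrArg Finsupp.degree hef
      rw [map_add] at this
      omega
    subst he
    exact absurd (by rw [← hef, zero_add]) hne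
  · simp

section LinearForms

variable [DecidableEq σ] (s : Finset σ) (u v : σ → R)

theorem coeff_sum_C_mul_X_mul_sum_C_mul_X (m : σ →₀ ℕ) :
    coeff m ((∑ p ∈ s, C (u p) * X p) * ∑ q ∈ s, C (v q) * X q) =
      ∑ p ∈ s, ∑ q ∈ s,
        if Finsupp.single p 1 + Finsupp.single q 1 = m then u p * v q else 0 := by
  simp only [Finset.sum_mul_sum, coeff_sum]
  refine Finset.sum_congr rfl fun p _ => Finset.sum_congr rfl fun q _ => ?_
  rw [mul_mul_mul_comm, ← C_mul, X, X, monomial_mul, one_mul, C_mul_monomial, mul_one,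
    coeff_monomial]

theorem coeff_single_two_sum_C_mul_X_mul_sum_C_mul_X (i : σ) :
    coeff (Finsupp.single i 2) ((∑ p ∈ s, C (u p) * X p) * ∑ q ∈ s, C (v q) * X q) =
      if i ∈ s then u i * v i else 0 := by
  rw [coeff_sum_C_mul_X_mul_sum_C_mul_X, ← one_add_one_eq_two, Finsupp.single_add]
  by_cases hi : i ∈ s <;> simp [Finsupp.single_one_add_single_one_eq_iff, ite_and, hi]

theorem coeff_single_add_single_sum_C_mul_X_mul_sum_C_mul_X {i j : σ} (hij : i ≠ j)
    (hi : i ∈ s) (hj : j ∈ s) :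
    coeff (Finsupp.single i 1 + Finsupp.single j 1)
        ((∑ p ∈ s, C (u p) * X p) * ∑ q ∈ s, C (v q) * X q) = u i * v j + u j * v i := by
  rw [coeff_sum_C_mul_X_mul_sum_C_mul_X]
  simp only [Finsupp.single_one_add_single_one_eq_iff]
  rw [Finset.sum_eq_add i j hij (fun p _ hp => by simp [hp.1, hp.2]) (absurd hi) (absurd hj)]
  simp [hij, hij.symm, hi, hj]

end LinearForms

end MvPolynomial

section BottIdeal

variable {n : ℕ} (A : Matrix (Fin n) (Fin n) ℤ)

theorem isHomogeneous_bottGenerator (i : Fin n) :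
    (X i ^ 2 - bottAlpha A i * X i).IsHomogeneous 2 := by
  refine (isHomogeneous_X_pow i 2).sub ?_
  refine IsHomogeneous.mul (n := 1) ?_ (isHomogeneous_X ℤ i)
  exact IsHomogeneous.sum _ _ _ fun j _ => isHomogeneous_C_mul_X (A i j) j

theorem coeff_single_two_bottGenerator (i r : Fin n) :
    coeff (Finsupp.single i 2) (X r ^ 2 - bottAlpha A r * X r) = if r = i then 1 else 0 := by
  have hα : coeff (Finsupp.single i 2) (bottAlpha A r * X r) = 0 := by
    rw [bottAlpha, Finset.sum_mul, coeff_sum]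
    refine Finset.sum_eq_zero fun j hj => ?_
    rw [mul_assoc, coeff_C_mul, X, X, monomial_mul, one_mul, coeff_monomial,
      ← one_add_one_eq_two, Finsupp.single_add, if_neg, mul_zero]
    rw [Finsupp.single_one_add_single_one_eq_iff]
    rintro (⟨rfl, rfl⟩ | ⟨rfl, rfl⟩) <;> simp at hj
  simp [coeff_X_pow, hα, Finsupp.single_left_inj two_ne_zero]

theorem coeff_eq_zero_of_mem_bottIdeal {P : MvPolynomial (Fin n) ℤ} (hP : P ∈ bottIdeal A)
    (hsq : ∀ i, coeff (Finsupp.single i 2) P = 0) {m : Fin n →₀ ℕ} (hm : m.degree = 2) :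
    coeff m P = 0 := by
  obtain ⟨q, rfl⟩ := (Submodule.mem_span_range_iff_exists_fun _).mp hP
  have hcoeff : ∀ m : Fin n →₀ ℕ, m.degree = 2 →
      coeff m (∑ i, q i • (X i ^ 2 - bottAlpha A i * X i)) =
        ∑ i, coeff 0 (q i) * coeff m (X i ^ 2 - bottAlpha A i * X i) := fun m hm => by
    simp only [coeff_sum, smul_eq_mul, (isHomogeneous_bottGenerator A _).coeff_mul_of_degree_eq hm]
  have hq : ∀ i, coeff 0 (q i) = 0 := fun i => by
    have := (hcoeff _ (Finsupp.degree_single i 2)).symm.trans (hsq i)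
    simpa only [coeff_single_two_bottGenerator, mul_ite, mul_one, mul_zero, Finset.sum_ite_eq',
      Finset.mem_univ, if_true] using this
  rw [hcoeff m hm]
  simp [hq]

theorem sum_intCast_mul_bx (s : Finset (Fin n)) (u : Fin n → ℤ) :
    ∑ j ∈ s, (u j : MvPolynomial (Fin n) ℤ ⧸ bottIdeal A) * bx A j =
      Ideal.Quotient.mk (bottIdeal A) (∑ j ∈ s, C (u j) * X j) := by
  simp [bx, map_sum, map_mul]

end BottIdeal

theorem stmt15_general {n : ℕ} (A' : Matrix (Fin n) (Fin n) ℤ)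
    (k : Fin n) (c a : Fin n → ℤ)
    (hprod :
      (∑ j ∈ Finset.univ.filter (fun j => j < k),
          (c j : MvPolynomial (Fin n) ℤ ⧸ bottIdeal A') * bx A' j) *
      (∑ j ∈ Finset.univ.filter (fun j => j < k),
          ((c j - a j : ℤ) : MvPolynomial (Fin n) ℤ ⧸ bottIdeal A') * bx A' j)
        = 0)
    (hca : ∀ j : Fin n, j < k → c j = 0 ∨ (c j = a j ∧ (a j = 1 ∨ a j = -1)))
    (hex : ∃ j : Fin n, j < k ∧ c j ≠ 0) :
    ∀ l : Fin n, l < k → c l = 0 → a l = 0 := by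
  intro l hl hcl
  obtain ⟨j, hj, hcj⟩ := hex
  set s := Finset.univ.filter (fun j : Fin n => j < k)
  have hmem : (∑ i ∈ s, C (c i) * X i) * (∑ i ∈ s, C (c i - a i) * X i) ∈ bottIdeal A' := by
    rw [← Ideal.Quotient.eq_zero_iff_mem, map_mul, ← sum_intCast_mul_bx, ← sum_intCast_mul_bx]
    exact hprod
  have hsq : ∀ i, coeff (Finsupp.single i 2)
      ((∑ i ∈ s, C (c i) * X i) * (∑ i ∈ s, C (c i - a i) * X i)) = 0 := fun i => by
    rw [coeff_single_two_sum_C_mul_X_mul_sum_C_mul_X]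
    split_ifs with hi
    · rcases hca i (Finset.mem_filter.mp hi).2 with h | ⟨h, -⟩ <;> simp [h]
    · rfl
  have hjl : j ≠ l := by rintro rfl; exact hcj hcl
  have hcross := coeff_eq_zero_of_mem_bottIdeal A' hmem hsq
    (m := Finsupp.single j 1 + Finsupp.single l 1) (by simp)
  rw [coeff_single_add_single_sum_C_mul_X_mul_sum_C_mul_X s _ _ hjl (by simpa [s] using hj)
    (by simpa [s] using hl),
    hcl] at hcross
  simpa [hcj] using hcross

/-- In the cohomology ring `R'` of a Bott manifold, suppose
integers `c_j, a_{k,j}` (for `j < k`) satisfy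
`(Σ_{j<k} c_j x'_j)(Σ_{j<k}(c_j − a_{k,j})x'_j) = 0`, that for each `j < k`
either `c_j = 0` or `c_j = a_{k,j} ∈ {−1,1}`, and that `c_j ≠ 0` for some
`j < k`.  Then `a_{k,ℓ} = 0` for every `ℓ < k` with `c_ℓ = 0`. -/
theorem stmt15 {n : ℕ} (A' : Matrix (Fin n) (Fin n) ℤ)
    (hlt' : ∀ i j : Fin n, i < j → A' i j = 0)
    (hdiag' : ∀ i : Fin n, A' i i = -1)
    (k : Fin n) (c a : Fin n → ℤ)
    (hprod :
      (∑ j ∈ Finset.univ.filter (fun j => j < k),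
          (c j : MvPolynomial (Fin n) ℤ ⧸ bottIdeal A') * bx A' j) *
      (∑ j ∈ Finset.univ.filter (fun j => j < k),
          ((c j - a j : ℤ) : MvPolynomial (Fin n) ℤ ⧸ bottIdeal A') * bx A' j)
        = 0)
    (hca : ∀ j : Fin n, j < k → c j = 0 ∨ (c j = a j ∧ (a j = 1 ∨ a j = -1)))
    (hex : ∃ j : Fin n, j < k ∧ c j ≠ 0) :
    ∀ l : Fin n, l < k → c l = 0 → a l = 0 :=
  stmt15_general A' k c a hprod hca hex
end

section
/- Let A be an n×n lower triangular integer matrix with -1's on the diagonal such that A+E has all entries in {0,1,−1} and satisfies Suyama's Fano condition. For I ⊆ {1,...,n}, the matrix A_I = L_I^{-1} L_{I^c} also has all entries of A_I + E in {0,1,−1}. (Example of failure without the Fano condition: for A with rows (−1,0,0),(1,−1,0),(1,1,−1), the matrix A_∅ = A^{-1} has an entry −2.) -/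
/-- Suyama's condition on the `j`-th column of `B = A + E`: either the column is
zero, or it contains at most one `1` with every entry below that `1` vanishing,
and whenever there is a `−1` in row `i`, the entries below it coincide with the
entries of the `i`-th column below the diagonal. -/
def SuyamaCol {n : ℕ} (B : Matrix (Fin n) (Fin n) ℤ) (j : Fin n) : Prop :=
  (∀ i : Fin n, B i j = 0) ∨
  ((∀ i i' : Fin n, B i j = 1 → B i' j = 1 → i = i') ∧
   (∀ i i' : Fin n, B i j = 1 → i < i' → B i' j = 0) ∧
   (∀ i : Fin n, B i j = -1 → ∀ i' : Fin n, i < i' → B i' j = B i' i))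

open Matrix

variable {n : ℕ}

def SuyamaTail (B : Matrix (Fin n) (Fin n) ℤ) (t : ℕ) (v : Fin n → ℤ) : Prop :=
  (∀ i : Fin n, t ≤ i → v i = -1 ∨ v i = 0 ∨ v i = 1) ∧
  (∀ i i' : Fin n, t ≤ i → v i = 1 → i < i' → v i' = 0) ∧
  (∀ i : Fin n, t ≤ i → v i = -1 → ∀ i' : Fin n, i < i' → v i' = B i' i)

namespace SuyamaTail

variable {B : Matrix (Fin n) (Fin n) ℤ} {t : ℕ} {v w : Fin n → ℤ}

theorem of_le (h : n ≤ t) : SuyamaTail B t v :=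
  ⟨fun i hi => by omega, fun i _ hi => by omega, fun i hi => by omega⟩

theorem mono (hv : SuyamaTail B t v) {s : ℕ} (hts : t ≤ s) : SuyamaTail B s v :=
  ⟨fun i hi => hv.1 i (hts.trans hi), fun i i' hi => hv.2.1 i i' (hts.trans hi),
    fun i hi => hv.2.2 i (hts.trans hi)⟩

theorem congr (hv : SuyamaTail B t v) (hvw : ∀ i : Fin n, t ≤ i → v i = w i) :
    SuyamaTail B t w := by
  have hvw' : ∀ i i' : Fin n, t ≤ i → i < i' → v i' = w i' := fun i i' hi hii' =>
    hvw i' (hi.trans (Fin.le_iff_val_le_val.1 hii'.le))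
  refine ⟨fun i hi => hvw i hi ▸ hv.1 i hi, fun i i' hi h1 hii' => ?_, fun i hi h1 i' hii' => ?_⟩
  · rw [← hvw' i i' hi hii', hv.2.1 i i' hi (by rwa [hvw i hi]) hii']
  · rw [← hvw' i i' hi hii', hv.2.2 i hi (by rwa [hvw i hi]) i' hii']

theorem of_eq_zero (h : ∀ i : Fin n, t ≤ i → v i = 0) : SuyamaTail B t v :=
  SuyamaTail.congr (v := 0) ⟨fun _ _ => by simp, fun _ _ _ h1 => by simp at h1,
    fun _ _ h1 => by simp at h1⟩ fun i hi => (h i hi).symm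

theorem of_suyamaCol (hent : ∀ i j : Fin n, B i j = -1 ∨ B i j = 0 ∨ B i j = 1) {j : Fin n}
    (hsu : SuyamaCol B j) : SuyamaTail B t fun i => B i j := by
  refine ⟨fun i _ => hent i j, ?_, ?_⟩
  · rcases hsu with hz | ⟨_, hone, _⟩
    · intro i _ _ h1; simp [hz] at h1
    · exact fun i i' _ => hone i i'
  · rcases hsu with hz | ⟨_, _, hneg⟩
    · intro i _ h1; simp [hz] at h1
    · exact fun i _ => hneg i

/-- One step of forward substitution, pivoting on row `k`. -/
theorem succ (hent : ∀ i j : Fin n, B i j = -1 ∨ B i j = 0 ∨ B i j = 1)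
    (hsu : ∀ j, SuyamaCol B j) {k : Fin n} (hv : SuyamaTail B k v)
    (hw : ∀ i : Fin n, k < i → w i = v i + v k * B i k) : SuyamaTail B (k + 1) w := by
  have hw' : ∀ i : Fin n, (k : ℕ) + 1 ≤ i → w i = v i + v k * B i k := fun i hi =>
    hw i (Fin.lt_def.2 hi)
  rcases hv.1 k le_rfl with hk | hk | hk
  · refine of_eq_zero fun i hi => ?_
    rw [hw' i hi, hv.2.2 k le_rfl hk i (Fin.lt_def.2 hi), hk]
    ring
  · exact (hv.mono (Nat.le_succ _)).congr fun i hi => by rw [hw' i hi, hk, zero_mul, add_zero]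
  · refine (of_suyamaCol hent (hsu k)).congr fun i hi => ?_
    rw [hw' i hi, hv.2.1 k i le_rfl hk (Fin.lt_def.2 hi), hk]
    ring

end SuyamaTail

section ForwardSubstitution

variable (A : Matrix (Fin n) (Fin n) ℤ) (I : Finset (Fin n)) (x b : Fin n → ℤ)

def forwardResidual (t : ℕ) : Fin n → ℤ :=
  b - A *ᵥ fun k => if (k : ℕ) < t ∧ k ∉ I then x k else 0

theorem forwardResidual_zero : forwardResidual A I x b 0 = b := by
  funext i
  simp [forwardResidual, mulVec, dotProduct]

theorem forwardResidual_succ (k : Fin n) :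
    forwardResidual A I x b (k + 1) =
      forwardResidual A I x b k - fun i => A i k * if k ∈ I then 0 else x k := by
  funext i
  have hsplit : ∀ j : Fin n, (if (j : ℕ) < k + 1 ∧ j ∉ I then x j else 0) =
      (if (j : ℕ) < k ∧ j ∉ I then x j else 0) + if j = k ∧ k ∉ I then x k else 0 := by
    intro j
    rcases lt_trichotomy j k with hjk | rfl | hjk
    · have : (j : ℕ) < k := hjk
      simp [this, hjk.ne, show (j : ℕ) < k + 1 by omega]
    · simp
    · have : ¬ (j : ℕ) < k + 1 := by rw [Fin.lt_def] at hjk; omega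
      simp [this, hjk.ne', show ¬ (j : ℕ) < k by omega]
  simp only [forwardResidual, Pi.sub_apply, mulVec, dotProduct, hsplit, mul_add,
    Finset.sum_add_distrib]
  split_ifs
  · simp_all
  · simp_all
    ring

variable {A I x b}

theorem forwardResidual_self (hlt : ∀ i j : Fin n, i < j → A i j = 0)
    (hdiag : ∀ i : Fin n, A i i = -1)
    (hx : Lmat A I *ᵥ x = b) (i : Fin n) :
    forwardResidual A I x b i i = if i ∈ I then x i else -x i := by
  rw [← hx]
  simp only [forwardResidual, Pi.sub_apply, mulVec, dotProduct, ← Finset.sum_sub_distrib]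
  rw [Finset.sum_eq_single i]
  · by_cases hi : i ∈ I <;> simp [Lmat, hi, hdiag]
  · intro k _ hki
    rcases lt_or_gt_of_ne hki with hk | hk
    · by_cases hkI : k ∈ I <;> simp [Lmat, hkI, hki.symm, hk]
    · have : ¬ (k : ℕ) < i := by rw [Fin.lt_def] at hk; omega
      by_cases hkI : k ∈ I <;> simp [Lmat, hkI, hki.symm, this, hlt i k hk]
  · simp

variable (hlt : ∀ i j : Fin n, i < j → A i j = 0) (hdiag : ∀ i : Fin n, A i i = -1)
  (hent : ∀ i j : Fin n, (A + 1) i j = -1 ∨ (A + 1) i j = 0 ∨ (A + 1) i j = 1)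
  (hsu : ∀ j : Fin n, SuyamaCol (A + 1) j)
include hlt hdiag hent hsu

theorem suyamaTail_forwardResidual (hx : Lmat A I *ᵥ x = b) (hb : SuyamaTail (A + 1) 0 b)
    (t : ℕ) : SuyamaTail (A + 1) t (forwardResidual A I x b t) := by
  induction t with
  | zero => rwa [forwardResidual_zero]
  | succ t ih =>
    by_cases ht : t < n
    · obtain ⟨k, rfl⟩ : ∃ k : Fin n, (k : ℕ) = t := ⟨⟨t, ht⟩, rfl⟩
      rw [forwardResidual_succ]
      by_cases hk : k ∈ I
      · exact (ih.mono (Nat.le_succ _)).congr fun i _ => by simp [hk]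
      · refine ih.succ hent hsu fun i hki => ?_
        have hself := forwardResidual_self hlt hdiag hx k
        rw [if_neg hk] at hself
        rw [Pi.sub_apply, if_neg hk, hself, Matrix.add_apply, one_apply_ne hki.ne', add_zero]
        ring
    · exact SuyamaTail.of_le (by omega)

theorem entries_of_lmat_mulVec_eq (hx : Lmat A I *ᵥ x = b) (hb : SuyamaTail (A + 1) 0 b)
    (i : Fin n) : x i = -1 ∨ x i = 0 ∨ x i = 1 := by
  have hi := (suyamaTail_forwardResidual hlt hdiag hent hsu hx hb i).1 i le_rfl
  rw [forwardResidual_self hlt hdiag hx] at hi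
  split_ifs at hi <;> omega

end ForwardSubstitution

theorem lmat_add_lmat_compl (A : Matrix (Fin n) (Fin n) ℤ) (I : Finset (Fin n)) :
    Lmat A I + Lmat A Iᶜ = A + 1 := by
  ext i j
  by_cases hj : j ∈ I <;> by_cases hij : i = j <;> simp [Lmat, hj, hij, one_apply_ne, add_comm]

theorem isUnit_det_lmat {A : Matrix (Fin n) (Fin n) ℤ} (hlt : ∀ i j : Fin n, i < j → A i j = 0)
    (hdiag : ∀ i : Fin n, A i i = -1) (I : Finset (Fin n)) : IsUnit (Lmat A I).det := by
  have htri : (Lmat A I).IsLowerTriangular := fun i j hij => by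
    simp [Lmat, (show i < j from hij).ne, hlt i j hij]
  rw [det_of_isLowerTriangular _ htri, IsUnit.prod_univ_iff]
  intro i
  by_cases hi : i ∈ I <;> simp [Lmat, hi, hdiag]

/-- If `A` is a Bott matrix whose associated Bott manifold is
Fano, i.e. all entries of `A + E` lie in `{−1,0,1}` and every column of `A + E`
satisfies Suyama's condition, then for every `I ⊆ {1,…,n}` the matrix
`A_I = L_I⁻¹ L_{Iᶜ}` again has all entries of `A_I + E` in `{−1,0,1}`.
(Without the Fano condition this fails: the inverse of
`[[-1,0,0],[1,-1,0],[1,1,-1]]` is `[[-1,0,0],[-1,-1,0],[-2,-1,-1]]`,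
which has an entry `−2`.) -/
theorem stmt16 {n : ℕ} (A : Matrix (Fin n) (Fin n) ℤ)
    (hlt : ∀ i j : Fin n, i < j → A i j = 0)
    (hdiag : ∀ i : Fin n, A i i = -1)
    (hent : ∀ i j : Fin n, (A + 1) i j = -1 ∨ (A + 1) i j = 0 ∨ (A + 1) i j = 1)
    (hsu : ∀ j : Fin n, SuyamaCol (A + 1) j) :
    (∀ I : Finset (Fin n), ∀ i j : Fin n,
      ((Lmat A I)⁻¹ * Lmat A Iᶜ + 1) i j = -1 ∨
      ((Lmat A I)⁻¹ * Lmat A Iᶜ + 1) i j = 0 ∨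
      ((Lmat A I)⁻¹ * Lmat A Iᶜ + 1) i j = 1) ∧
    (!![(-1 : ℤ), 0, 0; 1, -1, 0; 1, 1, -1])⁻¹
      = !![(-1 : ℤ), 0, 0; -1, -1, 0; -2, -1, -1] := by
  refine ⟨fun I i j => ?_, inv_eq_right_inv ?_⟩
  · have hL := isUnit_det_lmat hlt hdiag I
    have hX : (Lmat A I)⁻¹ * Lmat A Iᶜ + 1 = (Lmat A I)⁻¹ * (A + 1) := by
      rw [← lmat_add_lmat_compl A I, mul_add, nonsing_inv_mul _ hL, add_comm]
    rw [hX]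
    have hcol : Lmat A I *ᵥ (fun r => ((Lmat A I)⁻¹ * (A + 1)) r j) = fun r => (A + 1) r j := by
      funext r
      change (Lmat A I * ((Lmat A I)⁻¹ * (A + 1))) r j = (A + 1) r j
      rw [← Matrix.mul_assoc, mul_nonsing_inv _ hL, Matrix.one_mul]
    exact entries_of_lmat_mulVec_eq hlt hdiag hent hsu hcol
      (SuyamaTail.of_suyamaCol hent (hsu j)) i
  · ext i j
    fin_cases i <;> fin_cases j <;> simp [mul_apply, Fin.sum_univ_three]
end
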